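/- Let P : F_2^n → ℝ/ℤ be P(x) = |x|/8. Then for every nonclassical polynomial Q : F_2^n → ℝ/ℤ of degree at most 2, |⟨e(P), e(Q)⟩|⁴ ≤ (3/4)^n. -/

import Mathlib

open scoped BigOperators

/-- Additive derivative of a map `P` in direction `h`. -/
def addDeriv {G M : Type*} [Add G] [Sub M] (h : G) (P : G → M) : G → M :=
  fun x => P (x + h) - P x

/-- The exponential `e(t) = exp(2πit)` on `ℝ/ℤ`. -/
noncomputable def ee (t : AddCircle (1 : ℝ)) : ℂ := (AddCircle.toCircle t : ℂ)

/-- Averaged inner product of two complex-valued functions on `F_2^n`. -/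
noncomputable def avgInner (n : ℕ) (u v : (Fin n → ZMod 2) → ℂ) : ℂ :=
  (1 / (2 : ℂ) ^ n) * ∑ x : Fin n → ZMod 2, u x * (starRingEnd ℂ) (v x)

/-
Two applications of Cauchy–Schwarz give the U² bound
`‖∑ f‖⁴ ≤ |G| ∑_{h,k} ‖∑_x Δ_k Δ_h f(x)‖` with multiplicative derivatives; for `f = e(P - Q)`
these are `e(Δ_k Δ_h P - Δ_k Δ_h Q)`, and `Δ_k Δ_h Q` is a constant since `Q` is quadratic, so `Q`
drops out. As `P` is a sum of one-variable phases, the inner sum factorises over coordinates: a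
factor is `2` unless `h_i = k_i = 1`, where it is `e(-1/4) + e(1/4) = 0`. So the double sum is
`6ⁿ`, and `‖⟨e(P), e(Q)⟩‖⁴ ≤ 2ⁿ 6ⁿ / 16ⁿ = (3/4)ⁿ`.
-/

open ComplexConjugate

lemma ee_add (a b : AddCircle (1 : ℝ)) : ee (a + b) = ee a * ee b := by
  simp [ee, AddCircle.toCircle_add]

lemma ee_zero : ee 0 = 1 := by simp [ee]

lemma ee_neg (a : AddCircle (1 : ℝ)) : ee (-a) = conj (ee a) := by
  rw [ee, AddCircle.toCircle_neg, Circle.coe_inv_eq_conj]; rfl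

lemma ee_sub (a b : AddCircle (1 : ℝ)) : ee (a - b) = ee a * conj (ee b) := by
  rw [sub_eq_add_neg, ee_add, ee_neg]

lemma norm_ee (a : AddCircle (1 : ℝ)) : ‖ee a‖ = 1 := Circle.norm_coe _

lemma ee_sum {ι : Type*} (s : Finset ι) (a : ι → AddCircle (1 : ℝ)) :
    ee (∑ i ∈ s, a i) = ∏ i ∈ s, ee (a i) := by
  classical
  induction s using Finset.induction_on with
  | empty => simp [ee]
  | insert i s hi ih => rw [Finset.sum_insert hi, Finset.prod_insert hi, ee_add, ih]

lemma ee_one_div_four : ee ((1 / 4 : ℝ) : AddCircle (1 : ℝ)) = Complex.I := by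
  rw [ee, AddCircle.toCircle_apply_mk, Circle.coe_exp]
  convert Complex.exp_pi_div_two_mul_I using 2
  push_cast; ring

section
variable {G M : Type*}

lemma addDeriv_sub [Add G] [AddCommGroup M] (h : G) (F F' : G → M) :
    addDeriv h (F - F') = addDeriv h F - addDeriv h F' := by
  ext x; simp only [addDeriv, Pi.sub_apply]; abel

lemma addDeriv_zero_left [AddZeroClass G] [AddGroup M] (F : G → M) : addDeriv 0 F = 0 := by
  ext; simp [addDeriv]

lemma addDeriv_zero_right [Add G] [AddGroup M] (h : G) : addDeriv h (0 : G → M) = 0 := by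
  ext; simp [addDeriv]

lemma addDeriv_addDeriv_apply_eq_apply_zero [AddZeroClass G] [AddGroup M] {Q : G → M}
    (hQ : ∀ h₁ h₂ h₃ x, addDeriv h₃ (addDeriv h₂ (addDeriv h₁ Q)) x = 0) (h k x : G) :
    addDeriv k (addDeriv h Q) x = addDeriv k (addDeriv h Q) 0 := by
  simpa only [addDeriv, zero_add] using sub_eq_zero.mp (hQ h k x 0)
end

lemma addDeriv_sum_apply {ι A M : Type*} [Fintype ι] [Add A] [AddCommGroup M]
    (φ : ι → A → M) (h : ι → A) :
    addDeriv h (fun x => ∑ i, φ i (x i)) = fun x => ∑ i, addDeriv (h i) (φ i) (x i) := by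
  ext x; simp [addDeriv, Finset.sum_sub_distrib]

lemma sum_sum_prod_eq_pow {ι A B R : Type*} [Fintype ι] [DecidableEq ι] [Fintype A] [Fintype B]
    [CommSemiring R] (w : A → B → R) :
    ∑ h : ι → A, ∑ k : ι → B, ∏ i, w (h i) (k i) = (∑ a, ∑ b, w a b) ^ Fintype.card ι := by
  calc ∑ h : ι → A, ∑ k : ι → B, ∏ i, w (h i) (k i) = ∑ h : ι → A, ∏ i, ∑ b, w (h i) b := by
        simp_rw [Fintype.prod_sum]
    _ = ∏ _i : ι, ∑ a, ∑ b, w a b := (Fintype.prod_sum fun _ a => ∑ b, w a b).symm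
    _ = _ := Finset.prod_const _

def mulDeriv {G : Type*} [Add G] (h : G) (f : G → ℂ) : G → ℂ := fun x => f (x + h) * conj (f x)

lemma mulDeriv_ee {G : Type*} [Add G] (h : G) (F : G → AddCircle (1 : ℝ)) :
    mulDeriv h (fun x => ee (F x)) = fun x => ee (addDeriv h F x) := by
  ext x; rw [mulDeriv, addDeriv, ee_sub]

section
variable {G : Type*} [AddGroup G] [Fintype G]

lemma sum_mul_conj_sum (f : G → ℂ) :
    (∑ x, f x) * conj (∑ x, f x) = ∑ h, ∑ x, mulDeriv h f x :=
  calc (∑ x, f x) * conj (∑ x, f x) = ∑ x, (∑ y, f y) * conj (f x) := by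
        rw [map_sum, Finset.mul_sum]
    _ = ∑ x, ∑ h, f (x + h) * conj (f x) := by
        refine Finset.sum_congr rfl fun x _ => ?_
        rw [← Equiv.sum_comp (Equiv.addLeft x) f, Finset.sum_mul]
        rfl
    _ = _ := Finset.sum_comm

lemma norm_sum_sq_le (f : G → ℂ) : ‖∑ x, f x‖ ^ 2 ≤ ∑ h, ‖∑ x, mulDeriv h f x‖ :=
  calc ‖∑ x, f x‖ ^ 2 = ‖(∑ x, f x) * conj (∑ x, f x)‖ := by rw [norm_mul, Complex.norm_conj, sq]
    _ = ‖∑ h, ∑ x, mulDeriv h f x‖ := by rw [sum_mul_conj_sum]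
    _ ≤ _ := norm_sum_le _ _

lemma norm_sum_pow_four_le (f : G → ℂ) :
    ‖∑ x, f x‖ ^ 4 ≤ Fintype.card G * ∑ h, ∑ k, ‖∑ x, mulDeriv k (mulDeriv h f) x‖ :=
  calc ‖∑ x, f x‖ ^ 4 = (‖∑ x, f x‖ ^ 2) ^ 2 := by ring
    _ ≤ (∑ h, ‖∑ x, mulDeriv h f x‖) ^ 2 := by gcongr; exact norm_sum_sq_le f
    _ ≤ Fintype.card G * ∑ h, ‖∑ x, mulDeriv h f x‖ ^ 2 := sq_sum_le_card_mul_sum_sq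
    _ ≤ _ := by gcongr with h; exact norm_sum_sq_le _

lemma norm_sum_ee_sub_pow_four_le (P Q : G → AddCircle (1 : ℝ))
    (hQ : ∀ h₁ h₂ h₃ x, addDeriv h₃ (addDeriv h₂ (addDeriv h₁ Q)) x = 0) :
    ‖∑ x, ee (P x - Q x)‖ ^ 4 ≤
      Fintype.card G * ∑ h, ∑ k, ‖∑ x, ee (addDeriv k (addDeriv h P) x)‖ := by
  have hderiv : ∀ h k, ‖∑ x, mulDeriv k (mulDeriv h (fun x => ee ((P - Q) x))) x‖ =
      ‖∑ x, ee (addDeriv k (addDeriv h P) x)‖ := by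
    intro h k
    set c := addDeriv k (addDeriv h Q) 0
    have hc : ∀ x, addDeriv k (addDeriv h Q) x = c := addDeriv_addDeriv_apply_eq_apply_zero hQ h k
    rw [mulDeriv_ee, mulDeriv_ee, addDeriv_sub, addDeriv_sub]
    simp only [Pi.sub_apply, hc, ee_sub, ← Finset.sum_mul, norm_mul, Complex.norm_conj, norm_ee,
      mul_one]
  calc ‖∑ x, ee (P x - Q x)‖ ^ 4
      ≤ Fintype.card G * ∑ h, ∑ k, ‖∑ x, mulDeriv k (mulDeriv h fun x => ee ((P - Q) x)) x‖ :=
        norm_sum_pow_four_le _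
    _ = _ := by simp_rw [hderiv]

end

lemma norm_sum_ee_sum_apply {ι A : Type*} [Fintype ι] [DecidableEq ι] [Fintype A]
    (ψ : ι → A → AddCircle (1 : ℝ)) :
    ‖∑ x : ι → A, ee (∑ i, ψ i (x i))‖ = ∏ i, ‖∑ a, ee (ψ i a)‖ := by
  have h : ∀ x : ι → A, ee (∑ i, ψ i (x i)) = ∏ i, ee (ψ i (x i)) := fun x => ee_sum _ _
  simp_rw [h]
  rw [← norm_prod, Fintype.prod_sum]

lemma sum_zmod_two {M : Type*} [AddCommMonoid M] (g : ZMod 2 → M) : ∑ a, g a = g 0 + g 1 :=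
  Fin.sum_univ_two g

noncomputable def valDivEight (a : ZMod 2) : AddCircle (1 : ℝ) := ((a.val : ℝ) / 8 : ℝ)

lemma addDeriv_one_addDeriv_one_valDivEight_zero :
    addDeriv 1 (addDeriv 1 valDivEight) 0 = ((-(1 / 4) : ℝ) : AddCircle (1 : ℝ)) := by
  simp only [addDeriv, valDivEight, show (1 + 1 : ZMod 2) = 0 from rfl, zero_add, ZMod.val_zero,
    ZMod.val_one, ← AddCircle.coe_sub]
  norm_num

lemma addDeriv_one_addDeriv_one_valDivEight_one :
    addDeriv 1 (addDeriv 1 valDivEight) 1 = ((1 / 4 : ℝ) : AddCircle (1 : ℝ)) := by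
  simp only [addDeriv, valDivEight, show (1 + 1 : ZMod 2) = 0 from rfl, zero_add, ZMod.val_zero,
    ZMod.val_one, ← AddCircle.coe_sub]
  norm_num

lemma sum_sum_norm_sum_ee_addDeriv_valDivEight :
    ∑ b, ∑ c, ‖∑ a, ee (addDeriv c (addDeriv b valDivEight) a)‖ = 6 := by
  simp only [sum_zmod_two, addDeriv_zero_left, addDeriv_zero_right, Pi.zero_apply, ee_zero,
    addDeriv_one_addDeriv_one_valDivEight_zero, addDeriv_one_addDeriv_one_valDivEight_one,
    AddCircle.coe_neg, ee_neg, ee_one_div_four, Complex.conj_I, neg_add_cancel, norm_zero]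
  norm_num

lemma sum_sum_norm_sum_ee_addDeriv_addDeriv_valDivEight (n : ℕ) :
    ∑ h : Fin n → ZMod 2, ∑ k : Fin n → ZMod 2,
      ‖∑ x, ee (addDeriv k (addDeriv h (fun x => ∑ i, valDivEight (x i))) x)‖ = 6 ^ n := by
  simp_rw [addDeriv_sum_apply, norm_sum_ee_sum_apply]
  rw [sum_sum_prod_eq_pow fun b c => ‖∑ a, ee (addDeriv c (addDeriv b valDivEight) a)‖,
    sum_sum_norm_sum_ee_addDeriv_valDivEight, Fintype.card_fin]

theorem stmt_10 (n : ℕ)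
    (P : (Fin n → ZMod 2) → AddCircle (1 : ℝ))
    (hP : ∀ x, P x = ((((∑ i, ((x i).val : ℝ)) / 8 : ℝ)) : AddCircle (1 : ℝ)))
    (Q : (Fin n → ZMod 2) → AddCircle (1 : ℝ))
    (hQ : ∀ h₁ h₂ h₃ x, addDeriv h₃ (addDeriv h₂ (addDeriv h₁ Q)) x = 0) :
    (‖avgInner n (fun x => ee (P x)) (fun x => ee (Q x))‖) ^ 4
      ≤ (3 / 4 : ℝ) ^ n := by
  have hP' : P = fun x => ∑ i, valDivEight (x i) := by
    ext x; simp [hP, valDivEight, Finset.sum_div]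
  have hsum : ‖∑ x, ee (P x - Q x)‖ ^ 4 ≤ 2 ^ n * 6 ^ n := by
    have := norm_sum_ee_sub_pow_four_le P Q hQ
    rw [hP', sum_sum_norm_sum_ee_addDeriv_addDeriv_valDivEight, Fintype.card_fun, ZMod.card,
      Fintype.card_fin, ← hP'] at this
    exact_mod_cast this
  calc ‖avgInner n (fun x => ee (P x)) (fun x => ee (Q x))‖ ^ 4
      = ‖∑ x, ee (P x - Q x)‖ ^ 4 / 16 ^ n := by
        have hscale : ‖1 / (2 : ℂ) ^ n‖ ^ 4 = 1 / 16 ^ n := by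
          rw [norm_div, norm_one, norm_pow, Complex.norm_ofNat, div_pow, one_pow, ← pow_mul,
            mul_comm, pow_mul]
          norm_num
        rw [avgInner, norm_mul, mul_pow, hscale, one_div_mul_eq_div]
        simp_rw [ee_sub]
    _ ≤ 2 ^ n * 6 ^ n / 16 ^ n := by gcongr
    _ = (3 / 4) ^ n := by rw [← mul_pow, ← div_pow]; norm_num
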